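/- Suppose there exists a 4-GDD whose group sizes are g_1, g_2, …, g_m (all positive), and let v = g_1 + g_2 + ⋯ + g_m be the total number of points. Then 3g_i + g_j ≤ v for all i, j ∈ {1, 2, …, m} with i ≠ j. -/

import Mathlib

/-!
Fix a point `y` of the group `C`. Each point of another group `A` lies in a block with `y`, and a
block meets `A` at most once, so at least `|A|` blocks pass through `y`. Removing `y` from these
blocks leaves pairwise disjoint `(k - 1)`-sets avoiding `C`, since `y` and a point outside `C` are
in one block only. Hence `(k - 1) |A| ≤ v - |C|`.
-/

/-- `GDDExists k T` asserts the existence of a group divisible design with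
block size `k` whose multiset of group sizes is `T`: there is a finite point
set, a partition of it into nonempty groups whose sizes form the multiset `T`,
and a collection of blocks, each of size `k`, such that no block meets any
group in more than one point, and any two points from distinct groups appear
together in exactly one block. -/
def GDDExists (k : ℕ) (T : Multiset ℕ) : Prop :=
  ∃ (v : ℕ) (G : Finset (Finset (Fin v))) (B : Finset (Finset (Fin v))),
    (∀ g ∈ G, g.Nonempty) ∧
    (∀ x : Fin v, ∃! g : Finset (Fin v), g ∈ G ∧ x ∈ g) ∧
    G.val.map Finset.card = T ∧
    (∀ b ∈ B, b.card = k) ∧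
    (∀ b ∈ B, ∀ g ∈ G, (b ∩ g).card ≤ 1) ∧
    (∀ x y : Fin v, (∀ g ∈ G, ¬ (x ∈ g ∧ y ∈ g)) →
      ∃! b : Finset (Fin v), b ∈ B ∧ x ∈ b ∧ y ∈ b)

open Finset

theorem Finset.exists_ne_of_map_val_eq {β γ ι : Type*} {s : Finset β}
    {t : Finset ι} {f : β → γ} {g : ι → γ} (h : s.val.map f = t.val.map g) {i j : ι}
    (hi : i ∈ t) (hj : j ∈ t) (hij : i ≠ j) :
    ∃ a ∈ s, ∃ c ∈ s, a ≠ c ∧ f a = g i ∧ f c = g j := by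
  classical
  have hj' : j ∈ t.val.erase i := (t.nodup.mem_erase_iff).2 ⟨hij.symm, hj⟩
  rw [← Multiset.cons_erase hi, ← Multiset.cons_erase hj', Multiset.map_cons,
    Multiset.map_cons] at h
  obtain ⟨a, ha, hfa, h⟩ := (Multiset.map_eq_cons _ _ _ _).2 h
  obtain ⟨c, hc, hfc, -⟩ := (Multiset.map_eq_cons _ _ _ _).2 h
  obtain ⟨hca, hc⟩ := (s.nodup.mem_erase_iff).1 hc
  exact ⟨a, ha, c, hc, hca.symm, hfa, hfc⟩

structure IsGDD {α : Type*} [DecidableEq α] (k : ℕ) (G B : Finset (Finset α)) : Prop where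
  nonempty_of_mem : ∀ C ∈ G, C.Nonempty
  existsUnique_group : ∀ x, ∃! C, C ∈ G ∧ x ∈ C
  card_block : ∀ b ∈ B, b.card = k
  card_inter_le_one : ∀ b ∈ B, ∀ C ∈ G, (b ∩ C).card ≤ 1
  existsUnique_block : ∀ x y, (∀ C ∈ G, ¬ (x ∈ C ∧ y ∈ C)) → ∃! b, b ∈ B ∧ x ∈ b ∧ y ∈ b

namespace IsGDD

variable {α : Type*} [DecidableEq α] {k : ℕ} {G B : Finset (Finset α)} {A C : Finset α}
  {x y : α}

theorem eq_of_mem_of_mem (hG : IsGDD k G B) (hA : A ∈ G) (hC : C ∈ G) (hxA : x ∈ A)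
    (hxC : x ∈ C) : A = C :=
  (hG.existsUnique_group x).unique ⟨hA, hxA⟩ ⟨hC, hxC⟩

theorem existsUnique_block_of_mem_of_not_mem (hG : IsGDD k G B) (hA : A ∈ G) (hxA : x ∈ A)
    (hyA : y ∉ A) : ∃! b, b ∈ B ∧ x ∈ b ∧ y ∈ b :=
  hG.existsUnique_block x y fun _ hC ⟨hxC, hyC⟩ ↦
    hyA (hG.eq_of_mem_of_mem hA hC hxA hxC ▸ hyC)

theorem sum_card_groups [Fintype α] (hG : IsGDD k G B) : ∑ C ∈ G, C.card = Fintype.card α := by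
  have hdisj : (G : Set (Finset α)).PairwiseDisjoint id := fun A hA C hC hAC ↦
    disjoint_left.2 fun _ hxA hxC ↦ hAC (hG.eq_of_mem_of_mem hA hC hxA hxC)
  have hcover : G.biUnion id = univ := eq_univ_of_forall fun x ↦ by
    obtain ⟨C, ⟨hC, hxC⟩, -⟩ := hG.existsUnique_group x
    exact mem_biUnion.2 ⟨C, hC, hxC⟩
  calc ∑ C ∈ G, C.card = (G.biUnion id).card := (card_biUnion hdisj).symm
    _ = Fintype.card α := by rw [hcover, card_univ]

theorem card_le_card_blocks_through (hG : IsGDD k G B) (hA : A ∈ G) (hyA : y ∉ A) :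
    A.card ≤ (B.filter (y ∈ ·)).card := by
  have hcover : A = (B.filter (y ∈ ·)).biUnion (· ∩ A) := by
    ext x
    refine ⟨fun hxA ↦ ?_, fun hx ↦ ?_⟩
    · obtain ⟨b, ⟨hb, hxb, hyb⟩, -⟩ := hG.existsUnique_block_of_mem_of_not_mem hA hxA hyA
      exact mem_biUnion.2 ⟨b, mem_filter.2 ⟨hb, hyb⟩, mem_inter.2 ⟨hxb, hxA⟩⟩
    · obtain ⟨b, -, hx⟩ := mem_biUnion.1 hx
      exact (mem_inter.1 hx).2
  calc A.card = ((B.filter (y ∈ ·)).biUnion (· ∩ A)).card := congrArg card hcover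
    _ ≤ ∑ b ∈ B.filter (y ∈ ·), (b ∩ A).card := card_biUnion_le
    _ ≤ ∑ _b ∈ B.filter (y ∈ ·), 1 :=
        sum_le_sum fun b hb ↦ hG.card_inter_le_one b (mem_filter.1 hb).1 A hA
    _ = (B.filter (y ∈ ·)).card := by rw [card_eq_sum_ones]

theorem mul_card_blocks_through_add_card_le [Fintype α] (hG : IsGDD k G B) (hC : C ∈ G)
    (hyC : y ∈ C) : (k - 1) * (B.filter (y ∈ ·)).card + C.card ≤ Fintype.card α := by
  set By := B.filter (y ∈ ·)
  have havoid : ∀ b ∈ By, ∀ z ∈ b.erase y, z ∉ C := by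
    intro b hb z hz hzC
    obtain ⟨hzy, hzb⟩ := mem_erase.1 hz
    have hb := mem_filter.1 hb
    exact hzy (card_le_one.1 (hG.card_inter_le_one b hb.1 C hC) z (mem_inter.2 ⟨hzb, hzC⟩)
      y (mem_inter.2 ⟨hb.2, hyC⟩))
  have hdisj : (By : Set (Finset α)).PairwiseDisjoint (·.erase y) := by
    intro b₁ hb₁ b₂ hb₂ hne
    refine disjoint_left.2 fun z hz₁ hz₂ ↦ hne ?_
    have hb₁ := mem_filter.1 hb₁
    have hb₂ := mem_filter.1 hb₂
    exact (hG.existsUnique_block_of_mem_of_not_mem hC hyC (havoid b₁ (mem_filter.2 hb₁) z hz₁))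
      |>.unique ⟨hb₁.1, hb₁.2, (mem_erase.1 hz₁).2⟩ ⟨hb₂.1, hb₂.2, (mem_erase.1 hz₂).2⟩
  have hcard : (By.biUnion (·.erase y)).card = (k - 1) * By.card := by
    rw [card_biUnion hdisj, mul_comm, ← smul_eq_mul]
    refine sum_const_nat fun b hb ↦ ?_
    have hb := mem_filter.1 hb
    rw [card_erase_of_mem hb.2, hG.card_block b hb.1]
  have hsub : By.biUnion (·.erase y) ⊆ Cᶜ := fun z hz ↦ by
    obtain ⟨b, hb, hz⟩ := mem_biUnion.1 hz
    exact mem_compl.2 (havoid b hb z hz)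
  calc (k - 1) * By.card + C.card = (By.biUnion (·.erase y)).card + C.card := by rw [hcard]
    _ ≤ Cᶜ.card + C.card := by gcongr
    _ = Fintype.card α := card_compl_add_card C

theorem mul_card_add_card_le [Fintype α] (hG : IsGDD k G B) (hA : A ∈ G) (hC : C ∈ G)
    (hAC : A ≠ C) : (k - 1) * A.card + C.card ≤ Fintype.card α := by
  obtain ⟨y, hyC⟩ := hG.nonempty_of_mem C hC
  have hyA : y ∉ A := fun hyA ↦ hAC (hG.eq_of_mem_of_mem hA hC hyA hyC)
  calc (k - 1) * A.card + C.card
      ≤ (k - 1) * (B.filter (y ∈ ·)).card + C.card := by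
        gcongr; exact hG.card_le_card_blocks_through hA hyA
    _ ≤ Fintype.card α := hG.mul_card_blocks_through_add_card_le hC hyC

end IsGDD

theorem group_size_bound_general (m : ℕ) (g : Fin m → ℕ)
    (hgdd : GDDExists 4 (Multiset.map g Finset.univ.val)) :
    ∀ i j, i ≠ j → 3 * g i + g j ≤ ∑ l, g l := by
  intro i j hij
  obtain ⟨v, G, B, hne, huniq, hsizes, hcard, hinter, hblock⟩ := hgdd
  have hG : IsGDD 4 G B := ⟨hne, huniq, hcard, hinter, hblock⟩
  obtain ⟨A, hA, C, hC, hAC, hAi, hCj⟩ :=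
    exists_ne_of_map_val_eq hsizes (mem_univ i) (mem_univ j) hij
  have hv : ∑ l, g l = v := by
    rw [sum_eq_multiset_sum, ← hsizes, ← sum_eq_multiset_sum, hG.sum_card_groups,
      Fintype.card_fin]
  simpa [hv, hAi, hCj] using hG.mul_card_add_card_le hA hC hAC

theorem group_size_bound (m : ℕ) (g : Fin m → ℕ) (hg : ∀ i, 0 < g i)
    (hgdd : GDDExists 4 (Multiset.map g Finset.univ.val)) :
    ∀ i j, i ≠ j → 3 * g i + g j ≤ ∑ l, g l :=
  group_size_bound_general m g hgdd
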